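/- For the trivial weight λ = 0, the set of Weyl group elements w of G₂ such that w·0 = w(ρ) − ρ = m₁'γ₁ + m₂'γ₂ has both coefficients m₁', m₂' even is exactly {1, s₁s₂s₁, s₂s₁s₂, (s₁s₂)³}, i.e. the elements of lengths 0, 3, 3, and 6. -/

import Mathlib

/-!
The Weyl group acts on simple-root coordinates through a group of twelve integer matrices, so every
`w ∈ W` is one of twelve explicit linear maps. Since `w·0 = wρ − ρ` and the fundamental weights
differ from the simple roots by a unimodular change of basis, the parity condition says
`wρ ≡ ρ (mod 2)` in root coordinates, which singles out four of the twelve matrices.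

For the lengths, a simple reflection `sᵢ` negates `αᵢ` and permutes the other positive roots, so
the number of positive roots on which a vector is negative changes by at most one under `sᵢ`.
Hence a word for `w` has at least as many letters as `wρ` has such roots, and the given words
attain this bound.
-/

namespace G2

/-- The weight/root lattice of G₂ in coordinates: `(c₁, c₂)` represents `c₁α₁ + c₂α₂`,
where `α₁` is the short simple root and `α₂` is the long simple root. -/
def α1 : ℚ × ℚ := (1, 0)
def α2 : ℚ × ℚ := (0, 1)

/-- The simple reflection `s₁`: `s₁(α₁) = -α₁`, `s₁(α₂) = 3α₁ + α₂`. -/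
def s1fun : ℚ × ℚ → ℚ × ℚ := fun p => (-p.1 + 3 * p.2, p.2)
/-- The simple reflection `s₂`: `s₂(α₁) = α₁ + α₂`, `s₂(α₂) = -α₂`. -/
def s2fun : ℚ × ℚ → ℚ × ℚ := fun p => (p.1, p.1 - p.2)

lemma s1_invol : Function.Involutive s1fun := by
  intro p; rw [Prod.ext_iff]; constructor <;> simp [s1fun]

lemma s2_invol : Function.Involutive s2fun := by
  intro p; rw [Prod.ext_iff]; constructor <;> simp [s2fun]

/-- The simple reflections as permutations of the weight space. -/
def σ1 : Equiv.Perm (ℚ × ℚ) := Function.Involutive.toPerm s1fun s1_invol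
def σ2 : Equiv.Perm (ℚ × ℚ) := Function.Involutive.toPerm s2fun s2_invol

/-- The Weyl group of G₂, generated by the two simple reflections. -/
def W : Subgroup (Equiv.Perm (ℚ × ℚ)) := Subgroup.closure {σ1, σ2}

/-- Word length with respect to the simple reflections `s₁`, `s₂`. -/
noncomputable def len (w : Equiv.Perm (ℚ × ℚ)) : ℕ :=
  sInf {n | ∃ l : List (Equiv.Perm (ℚ × ℚ)),
    l.length = n ∧ (∀ x ∈ l, x = σ1 ∨ x = σ2) ∧ l.prod = w}

/-- `ρ = 5α₁ + 3α₂`, the half sum of positive roots. -/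
def ρv : ℚ × ℚ := (5, 3)
/-- The fundamental weight `γ₁ = 2α₁ + α₂`. -/
def γ1 : ℚ × ℚ := (2, 1)
/-- The fundamental weight `γ₂ = 3α₁ + 2α₂`. -/
def γ2 : ℚ × ℚ := (3, 2)

/-- The dot action `w · λ = w(λ + ρ) - ρ`. -/
def dot (w : Equiv.Perm (ℚ × ℚ)) (μ : ℚ × ℚ) : ℚ × ℚ := w (μ + ρv) - ρv

/-- The positive roots of G₂. -/
def Φplus : Set (ℚ × ℚ) :=
  {α1, α2, α1 + α2, (2 : ℚ) • α1 + α2, (3 : ℚ) • α1 + α2, (3 : ℚ) • α1 + (2 : ℚ) • α2}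

/-- The negative roots of G₂. -/
def Φminus : Set (ℚ × ℚ) := (fun p => -p) '' Φplus

/-- `γ^{M₁} = α₁/2`. -/
def γM1 : ℚ × ℚ := (1/2, 0)
/-- `κ^{M₁} = γ₂/2`. -/
def κM1 : ℚ × ℚ := (3/2, 1)
/-- `γ^{M₂} = α₂/2`. -/
def γM2 : ℚ × ℚ := (0, 1/2)
/-- `κ^{M₂} = γ₁/2`. -/
def κM2 : ℚ × ℚ := (1, 1/2)

/-- Kostant representatives for the maximal parabolic `P₁`. -/
def WP1 : Set (Equiv.Perm (ℚ × ℚ)) :=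
  {1, σ2, σ2 * σ1, σ2 * σ1 * σ2, σ2 * σ1 * σ2 * σ1, σ2 * σ1 * σ2 * σ1 * σ2}

/-- Kostant representatives for the maximal parabolic `P₂`. -/
def WP2 : Set (Equiv.Perm (ℚ × ℚ)) :=
  {1, σ1, σ1 * σ2, σ1 * σ2 * σ1, σ1 * σ2 * σ1 * σ2, σ1 * σ2 * σ1 * σ2 * σ1}

end G2

lemma List.countP_le_countP_add_one_of_perm_cons {α : Type*} [BEq α] {l l' : List α}
    {a b : α} (h : l'.Perm (b :: l.erase a)) (p : α → Bool) :
    l'.countP p ≤ l.countP p + 1 := by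
  rw [h.countP_eq, List.countP_cons]
  have := (List.erase_sublist (a := a) (l := l)).countP_le (p := p)
  split <;> omega

lemma Equiv.Perm.apply_list_prod_le_add_length {α : Type*} (φ : α → ℕ)
    {P : Equiv.Perm α → Prop} (hφ : ∀ s, P s → ∀ x, φ (s x) ≤ φ x + 1)
    {l : List (Equiv.Perm α)} (hl : ∀ s ∈ l, P s)
    (x : α) : φ (l.prod x) ≤ φ x + l.length := by
  induction l with
  | nil => simp
  | cons s l ih =>
    rw [List.prod_cons, Equiv.Perm.mul_apply, List.length_cons]
    have := ih fun t ht => hl t (List.mem_cons_of_mem s ht)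
    have := hφ s (hl s List.mem_cons_self) (l.prod x)
    omega

namespace G2

open Matrix

@[simp] lemma σ1_apply (p : ℚ × ℚ) : σ1 p = (-p.1 + 3 * p.2, p.2) := rfl

@[simp] lemma σ2_apply (p : ℚ × ℚ) : σ2 p = (p.1, p.1 - p.2) := rfl

lemma σ1_inv : σ1⁻¹ = σ1 := inv_eq_of_mul_eq_one_right (Equiv.ext s1_invol)

lemma σ2_inv : σ2⁻¹ = σ2 := inv_eq_of_mul_eq_one_right (Equiv.ext s2_invol)

lemma σ1_mem_W : σ1 ∈ W := Subgroup.subset_closure (Set.mem_insert _ _)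

lemma σ2_mem_W : σ2 ∈ W := Subgroup.subset_closure (Set.mem_insert_of_mem _ rfl)

def matAct (M : Matrix (Fin 2) (Fin 2) ℤ) (p : ℚ × ℚ) : ℚ × ℚ :=
  (M 0 0 * p.1 + M 0 1 * p.2, M 1 0 * p.1 + M 1 1 * p.2)

lemma matAct_one : matAct 1 = id := by
  ext p <;> simp [matAct]

lemma matAct_mul (M N : Matrix (Fin 2) (Fin 2) ℤ) : matAct (M * N) = matAct M ∘ matAct N := by
  ext p <;> simp [matAct, Matrix.mul_apply, Fin.sum_univ_two] <;> ring

lemma matAct_pow (M : Matrix (Fin 2) (Fin 2) ℤ) (n : ℕ) : matAct (M ^ n) = (matAct M)^[n] := by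
  induction n with
  | zero => simp [matAct_one]
  | succ n ih => rw [pow_succ, matAct_mul, ih, Function.iterate_succ]

def S1 : Matrix (Fin 2) (Fin 2) ℤ := !![-1, 3; 0, 1]

def S2 : Matrix (Fin 2) (Fin 2) ℤ := !![1, 0; 1, -1]

lemma coe_σ1 : ⇑σ1 = matAct S1 := by
  ext p <;> simp [matAct, S1]

lemma coe_σ2 : ⇑σ2 = matAct S2 := by
  ext p <;> simp [matAct, S2]
  ring

/-- The dihedral group of order 12 generated by `S1` and `S2`. -/
def weylMatrices : Finset (Matrix (Fin 2) (Fin 2) ℤ) :=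
  {!![1, 0; 0, 1], !![-1, 3; 0, 1], !![1, 0; 1, -1], !![2, -3; 1, -1], !![-1, 3; -1, 2],
   !![-2, 3; -1, 2], !![2, -3; 1, -2], !![1, -3; 1, -2], !![-2, 3; -1, 1], !![-1, 0; -1, 1],
   !![1, -3; 0, -1], !![-1, 0; 0, -1]}

lemma mul_mem_weylMatrices :
    ∀ M ∈ weylMatrices, ∀ N ∈ weylMatrices, M * N ∈ weylMatrices := by
  decide

lemma exists_mem_weylMatrices_of_mem_W {w : Equiv.Perm (ℚ × ℚ)} (hw : w ∈ W) :
    ∃ M ∈ weylMatrices, ⇑w = matAct M := by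
  have gen : ∀ x ∈ ({σ1, σ2} : Set (Equiv.Perm (ℚ × ℚ))), ∃ M ∈ weylMatrices, ⇑x = matAct M := by
    rintro x (rfl | rfl)
    exacts [⟨S1, by decide, coe_σ1⟩, ⟨S2, by decide, coe_σ2⟩]
  induction hw using Subgroup.closure_induction'' with
  | mem x hx => exact gen x hx
  | inv_mem x hx =>
    rcases hx with rfl | rfl
    · exact σ1_inv ▸ gen σ1 (Or.inl rfl)
    · exact σ2_inv ▸ gen σ2 (Or.inr rfl)
  | one => exact ⟨1, by decide, matAct_one.symm⟩
  | mul x y _ _ hx hy =>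
    obtain ⟨M, hM, hxM⟩ := hx
    obtain ⟨N, hN, hyN⟩ := hy
    refine ⟨M * N, mul_mem_weylMatrices M hM N hN, ?_⟩
    rw [Equiv.Perm.coe_mul, hxM, hyN, matAct_mul]

def HasEvenFundamentalCoords (v : ℚ × ℚ) : Prop :=
  ∀ a b : ℚ, v = a • γ1 + b • γ2 → (∃ k : ℤ, a = 2 * k) ∧ (∃ k : ℤ, b = 2 * k)

/-- The change of basis from `γ1, γ2` to `α1, α2` is unimodular, so evenness can be read off in
either basis. -/
lemma hasEvenFundamentalCoords_iff (v : ℚ × ℚ) :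
    HasEvenFundamentalCoords v ↔ (∃ k : ℤ, v.1 = 2 * k) ∧ (∃ k : ℤ, v.2 = 2 * k) := by
  have coords : v = (2 * v.1 - 3 * v.2) • γ1 + (2 * v.2 - v.1) • γ2 := by
    ext <;> simp [γ1, γ2] <;> ring
  constructor
  · intro h
    obtain ⟨⟨k, hk⟩, ⟨l, hl⟩⟩ := h _ _ coords
    exact ⟨⟨2 * k + 3 * l, by push_cast; linarith⟩, ⟨k + 2 * l, by push_cast; linarith⟩⟩
  · rintro ⟨⟨k, hk⟩, ⟨l, hl⟩⟩ a b rfl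
    simp only [γ1, γ2, Prod.smul_mk, Prod.fst_add, Prod.snd_add, smul_eq_mul] at hk hl
    exact ⟨⟨2 * k - 3 * l, by push_cast; linarith⟩, ⟨2 * l - k, by push_cast; linarith⟩⟩

lemma exists_intCast_eq_two_mul_iff (z : ℤ) : (∃ k : ℤ, (z : ℚ) = 2 * k) ↔ 2 ∣ z := by
  constructor
  · rintro ⟨k, hk⟩
    exact ⟨k, by exact_mod_cast hk⟩
  · rintro ⟨k, rfl⟩
    exact ⟨k, by push_cast; ring⟩

/-- `wρ − ρ` for `w` acting by `M`, with `ρ = 5α₁ + 3α₂`. -/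
def rhoShift (M : Matrix (Fin 2) (Fin 2) ℤ) : Fin 2 → ℤ := M *ᵥ ![5, 3] - ![5, 3]

lemma dot_zero_eq_rhoShift {w : Equiv.Perm (ℚ × ℚ)} {M : Matrix (Fin 2) (Fin 2) ℤ}
    (hw : ⇑w = matAct M) : dot w 0 = ((rhoShift M 0 : ℚ), (rhoShift M 1 : ℚ)) := by
  ext <;> simp [dot, hw, matAct, rhoShift, ρv]

lemma hasEvenFundamentalCoords_dot_zero_iff {w : Equiv.Perm (ℚ × ℚ)}
    {M : Matrix (Fin 2) (Fin 2) ℤ} (hw : ⇑w = matAct M) :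
    HasEvenFundamentalCoords (dot w 0) ↔ ∀ i, 2 ∣ rhoShift M i := by
  rw [dot_zero_eq_rhoShift hw, hasEvenFundamentalCoords_iff, exists_intCast_eq_two_mul_iff,
    exists_intCast_eq_two_mul_iff, Fin.forall_fin_two]

lemma filter_weylMatrices :
    weylMatrices.filter (fun M => ∀ i, 2 ∣ rhoShift M i) =
      {1, S1 * S2 * S1, S2 * S1 * S2, (S1 * S2) ^ 3} := by
  decide

/-- A `W`-invariant inner product, normalised by `B α1 α1 = 2`. -/
def B (v w : ℚ × ℚ) : ℚ := 2 * v.1 * w.1 - 3 * (v.1 * w.2 + v.2 * w.1) + 6 * v.2 * w.2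

lemma B_σ1 (v w : ℚ × ℚ) : B (σ1 v) w = B v (σ1 w) := by
  simp only [B, σ1_apply]
  ring

lemma B_σ2 (v w : ℚ × ℚ) : B (σ2 v) w = B v (σ2 w) := by
  simp only [B, σ2_apply]
  ring

def posRoots : List (ℚ × ℚ) := [(1, 0), (0, 1), (1, 1), (2, 1), (3, 1), (3, 2)]

/-- For `v = wρ` this counts the positive roots `α` with `w⁻¹α < 0`, i.e. it is the length
of `w`. -/
def inversions (v : ℚ × ℚ) : ℕ := posRoots.countP fun α => B v α < 0

lemma map_σ1_posRoots_perm : (posRoots.map σ1).Perm (-(1, 0) :: posRoots.erase (1, 0)) := by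
  decide +kernel

lemma map_σ2_posRoots_perm : (posRoots.map σ2).Perm (-(0, 1) :: posRoots.erase (0, 1)) := by
  decide +kernel

lemma inversions_reflection_le {s : Equiv.Perm (ℚ × ℚ)} (hB : ∀ v w, B (s v) w = B v (s w))
    {a : ℚ × ℚ} (hs : (posRoots.map s).Perm (-a :: posRoots.erase a)) (v : ℚ × ℚ) :
    inversions (s v) ≤ inversions v + 1 := by
  have : inversions (s v) = (posRoots.map s).countP fun α => B v α < 0 := by
    simp only [inversions, hB, List.countP_map, Function.comp_def]
  rw [this]
  exact List.countP_le_countP_add_one_of_perm_cons hs _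

lemma inversions_le_of_isSimpleReflection (s : Equiv.Perm (ℚ × ℚ)) (hs : s = σ1 ∨ s = σ2)
    (v : ℚ × ℚ) : inversions (s v) ≤ inversions v + 1 := by
  rcases hs with rfl | rfl
  exacts [inversions_reflection_le B_σ1 map_σ1_posRoots_perm v,
    inversions_reflection_le B_σ2 map_σ2_posRoots_perm v]

lemma len_eq_of_inversions_eq_length {w : Equiv.Perm (ℚ × ℚ)} (l : List (Equiv.Perm (ℚ × ℚ)))
    (hl : ∀ x ∈ l, x = σ1 ∨ x = σ2) (hw : l.prod = w) (h : inversions (w ρv) = l.length) :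
    len w = l.length := by
  have hword : l.length ∈ {n | ∃ l : List (Equiv.Perm (ℚ × ℚ)),
      l.length = n ∧ (∀ x ∈ l, x = σ1 ∨ x = σ2) ∧ l.prod = w} := ⟨l, rfl, hl, hw⟩
  refine le_antisymm (Nat.sInf_le hword) (le_csInf ⟨_, hword⟩ ?_)
  rintro n ⟨l', rfl, hl', rfl⟩
  have hρ : inversions ρv = 0 := by decide +kernel
  have := Equiv.Perm.apply_list_prod_le_add_length inversions
    inversions_le_of_isSimpleReflection hl' ρv
  omega

lemma coe_σ1_mul_σ2_mul_σ1 : ⇑(σ1 * σ2 * σ1) = matAct (S1 * S2 * S1) := by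
  simp only [Equiv.Perm.coe_mul, coe_σ1, coe_σ2, matAct_mul]

lemma coe_σ2_mul_σ1_mul_σ2 : ⇑(σ2 * σ1 * σ2) = matAct (S2 * S1 * S2) := by
  simp only [Equiv.Perm.coe_mul, coe_σ1, coe_σ2, matAct_mul]

lemma coe_σ1_mul_σ2_pow_three : ⇑((σ1 * σ2) ^ 3) = matAct ((S1 * S2) ^ 3) := by
  simp only [Equiv.Perm.coe_pow, Equiv.Perm.coe_mul, coe_σ1, coe_σ2, matAct_mul, matAct_pow]

lemma mem_of_mem_W_of_hasEvenFundamentalCoords {w : Equiv.Perm (ℚ × ℚ)} (hW : w ∈ W)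
    (heven : HasEvenFundamentalCoords (dot w 0)) :
    w ∈ ({1, σ1 * σ2 * σ1, σ2 * σ1 * σ2, (σ1 * σ2) ^ 3} : Set (Equiv.Perm (ℚ × ℚ))) := by
  obtain ⟨M, hM, hw⟩ := exists_mem_weylMatrices_of_mem_W hW
  have hM' : M ∈ weylMatrices.filter fun M => ∀ i, 2 ∣ rhoShift M i :=
    Finset.mem_filter.2 ⟨hM, (hasEvenFundamentalCoords_dot_zero_iff hw).1 heven⟩
  rw [filter_weylMatrices] at hM'
  simp only [Finset.mem_insert, Finset.mem_singleton] at hM'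
  rcases hM' with rfl | rfl | rfl | rfl
  exacts [.inl (Equiv.coe_fn_injective (hw.trans matAct_one)),
    .inr (.inl (Equiv.coe_fn_injective (hw.trans coe_σ1_mul_σ2_mul_σ1.symm))),
    .inr (.inr (.inl (Equiv.coe_fn_injective (hw.trans coe_σ2_mul_σ1_mul_σ2.symm)))),
    .inr (.inr (.inr (Equiv.coe_fn_injective (hw.trans coe_σ1_mul_σ2_pow_three.symm))))]

/-- For `λ = 0`, the Weyl elements `w` with `w·0 = w(ρ) − ρ` having both coefficients even
in the fundamental weight basis are exactly `{1, s₁s₂s₁, s₂s₁s₂, (s₁s₂)³}`, of lengths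
`0, 3, 3, 6`. -/
theorem g2_parity_trivial_weight :
    {w : Equiv.Perm (ℚ × ℚ) | w ∈ W ∧ ∀ a b : ℚ,
        dot w 0 = a • γ1 + b • γ2 →
        (∃ k : ℤ, a = 2 * k) ∧ (∃ k : ℤ, b = 2 * k)}
      = {1, σ1 * σ2 * σ1, σ2 * σ1 * σ2, (σ1 * σ2) ^ 3} ∧
    len 1 = 0 ∧ len (σ1 * σ2 * σ1) = 3 ∧ len (σ2 * σ1 * σ2) = 3 ∧
    len ((σ1 * σ2) ^ 3) = 6 := by
  refine ⟨Set.ext fun w =>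
    ⟨fun ⟨hW, heven⟩ => mem_of_mem_W_of_hasEvenFundamentalCoords hW heven, ?_⟩, ?_, ?_, ?_, ?_⟩
  · rintro (rfl | rfl | rfl | rfl)
    · exact ⟨one_mem W, (hasEvenFundamentalCoords_dot_zero_iff matAct_one.symm).2 (by decide)⟩
    · exact ⟨mul_mem (mul_mem σ1_mem_W σ2_mem_W) σ1_mem_W,
        (hasEvenFundamentalCoords_dot_zero_iff coe_σ1_mul_σ2_mul_σ1).2 (by decide)⟩
    · exact ⟨mul_mem (mul_mem σ2_mem_W σ1_mem_W) σ2_mem_W,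
        (hasEvenFundamentalCoords_dot_zero_iff coe_σ2_mul_σ1_mul_σ2).2 (by decide)⟩
    · exact ⟨pow_mem (mul_mem σ1_mem_W σ2_mem_W) 3,
        (hasEvenFundamentalCoords_dot_zero_iff coe_σ1_mul_σ2_pow_three).2 (by decide)⟩
  · exact len_eq_of_inversions_eq_length [] (by simp) rfl (by decide +kernel)
  · exact len_eq_of_inversions_eq_length [σ1, σ2, σ1] (by simp) (by simp [mul_assoc])
      (by decide +kernel)
  · exact len_eq_of_inversions_eq_length [σ2, σ1, σ2] (by simp) (by simp [mul_assoc])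
      (by decide +kernel)
  · exact len_eq_of_inversions_eq_length [σ1, σ2, σ1, σ2, σ1, σ2] (by simp)
      (by simp [pow_succ, mul_assoc]) (by decide +kernel)

end G2
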